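/- arXiv:2412.05897 — 2 statements merged into one kernel-verified Lean document; each statement's English description precedes it below -/
import Mathlib

section
/- Let V be a real inner product space, let n be a positive integer, and let f₁, …, f_n, f, and f_t be unit vectors of V such that (1/n) Σ_{j=1}^n f_j = f. Then the empirical variance of the inner products with f_t is bounded as follows: (1/n) Σ_{k=1}^n (⟨f_k, f_t⟩ − (1/n) Σ_{j=1}^n ⟨f_j, f_t⟩)² ≤ 2 − (2/n) Σ_{k=1}^n ⟨f_k, f⟩. -/
/-!
Since the `f k` average to `f`, the mean of the `⟪f k, f_t⟫` is `⟪f, f_t⟫`, so the `k`-th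
deviation is `⟪f k - f, f_t⟫`. By Cauchy–Schwarz its square is at most
`‖f k - f‖² = 2 - 2 ⟪f k, f⟫`, and averaging over `k` gives the bound.
-/

open Finset

section UnitVectors

variable {V : Type*} [NormedAddCommGroup V] [InnerProductSpace ℝ V]

theorem sq_inner_le_norm_sq_of_norm_le_one (x : V) {w : V} (hw : ‖w‖ ≤ 1) :
    inner ℝ x w ^ 2 ≤ ‖x‖ ^ 2 := by
  have h : |inner ℝ x w| ≤ ‖x‖ :=
    (abs_real_inner_le_norm x w).trans (mul_le_of_le_one_right (norm_nonneg x) hw)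
  simpa only [sq_abs] using pow_le_pow_left₀ (abs_nonneg _) h 2

theorem norm_sub_sq_of_norm_eq_one {u v : V} (hu : ‖u‖ = 1) (hv : ‖v‖ = 1) :
    ‖u - v‖ ^ 2 = 2 - 2 * inner ℝ u v := by
  rw [norm_sub_sq_real, hu, hv]
  ring

theorem sq_inner_sub_inner_le_two_sub_two_inner {u v w : V} (hu : ‖u‖ = 1) (hv : ‖v‖ = 1)
    (hw : ‖w‖ ≤ 1) : (inner ℝ u w - inner ℝ v w) ^ 2 ≤ 2 - 2 * inner ℝ u v := by
  rw [← inner_sub_left, ← norm_sub_sq_of_norm_eq_one hu hv]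
  exact sq_inner_le_norm_sq_of_norm_le_one _ hw

end UnitVectors

/-- Upper bound of the paper's Eq. (13): for unit vectors `f 1, …, f n`, `f`, `f_t` in a
real inner product space with `(1/n) ∑ j f j = f`, the empirical variance of the inner
products `⟪f k, f_t⟫` is at most `2 - (2/n) ∑ k ⟪f k, f⟫`. -/
theorem uncertainty_upper_bound_without_teacher
    {V : Type*} [NormedAddCommGroup V] [InnerProductSpace ℝ V]
    (n : ℕ) (hn : 0 < n) (fs : Fin n → V) (f ft : V)
    (hfs : ∀ k, ‖fs k‖ = 1) (hf : ‖f‖ = 1) (hft : ‖ft‖ = 1)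
    (hmean : (1 / n : ℝ) • ∑ j, fs j = f) :
    (1 / n : ℝ) * ∑ k, ((inner ℝ (fs k) ft : ℝ) - (1 / n : ℝ) * ∑ j, (inner ℝ (fs j) ft : ℝ)) ^ 2
      ≤ 2 - (2 / n : ℝ) * ∑ k, (inner ℝ (fs k) f : ℝ) := by
  have hmean_inner : (1 / n : ℝ) * ∑ j, inner ℝ (fs j) ft = inner ℝ f ft := by
    rw [← hmean, real_inner_smul_left, sum_inner]
  calc (1 / n : ℝ) * ∑ k, (inner ℝ (fs k) ft - (1 / n : ℝ) * ∑ j, inner ℝ (fs j) ft) ^ 2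
      ≤ (1 / n : ℝ) * ∑ k, (2 - 2 * inner ℝ (fs k) f) := by
        rw [hmean_inner]
        gcongr with k
        exact sq_inner_sub_inner_le_two_sub_two_inner (hfs k) hf hft.le
    _ = 2 - (2 / n : ℝ) * ∑ k, inner ℝ (fs k) f := by
        have hn' : (n : ℝ) ≠ 0 := by positivity
        rw [sum_sub_distrib, ← mul_sum, sum_const, card_univ, Fintype.card_fin, nsmul_eq_mul]
        field_simp
end

section
/- (PAC-Bayes bound, McAllester) Let (Θ, 𝒜) and (Z, ℬ) be measurable spaces, let ℓ : Θ × Z → [0, 1] be jointly measurable, let D be a probability measure on Z (the data distribution), let P be a probability measure on Θ (the prior), let N ≥ 2 be an integer, and let δ ∈ (0, 1). Then, with probability at least 1 − δ over the draw of an i.i.d. sample (z₁, …, z_N) ∼ D^N, the following holds simultaneously for every probability measure Q on Θ (the posterior): E_{θ∼Q}[ E_{z∼D}[ℓ(θ, z)] ] ≤ E_{θ∼Q}[ (1/N) Σ_{i=1}^N ℓ(θ, z_i) ] + √( (KL(Q ‖ P) + ln(N/δ)) / (2(N − 1)) ). -/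
open MeasureTheory ProbabilityTheory
open scoped Classical

/-- The Kullback–Leibler divergence `KL(Q ‖ P)`: equal to `∫ log (dQ/dP) dQ` when `Q ≪ P`
and the log-likelihood ratio is `Q`-integrable, and `+∞` otherwise. -/
noncomputable def klDivergence {α : Type*} [MeasurableSpace α] (Q P : Measure α) : EReal :=
  if Q ≪ P ∧ Integrable (llr Q P) Q then ((∫ x, llr Q P x ∂Q : ℝ) : EReal) else ⊤

/-!
Write `Δ θ z = max (R θ - R̂_z θ) 0` (`meanExcess`) for the excess of the true risk of `θ` over
its empirical risk on the sample `z`, and `s = 2 (N - 1)`. For fixed `θ`, Hoeffding's inequality gives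
`P(Δ θ ≥ ε) ≤ exp (-2 N ε²)`, and the layer-cake formula turns this tail bound into
`E_z exp (s Δ²) ≤ N`. By Fubini the prior average `F z = E_{θ∼P} exp (s Δ θ z ²)` also has
expectation at most `N`, so Markov's inequality gives `F z < N / δ` with probability at least
`1 - δ`. For such a sample and any posterior `Q`, the Donsker–Varadhan change of measure
`E_Q g ≤ KL(Q ‖ P) + log E_P exp g` with `g = s Δ²`, together with Jensen's
`(E_Q Δ)² ≤ E_Q Δ²`, bounds `E_Q R - E_Q R̂_z ≤ E_Q Δ` by the square root in the statement.
-/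

open Real Set Function

section TailIntegral

variable {p : ℝ}

lemma integrableOn_Ioi_zero_ite_rpow (hp : 1 < p) :
    IntegrableOn (fun u : ℝ => if u ≤ 1 then 1 else u ^ (-p)) (Ioi 0) := by
  rw [← Ioc_union_Ioi_eq_Ioi zero_le_one]
  refine IntegrableOn.union ?_ ?_
  · exact (integrableOn_const (by simp)).congr_fun (fun u hu => (if_pos hu.2).symm)
      measurableSet_Ioc
  · exact (integrableOn_Ioi_rpow_of_lt (by linarith) one_pos).congr_fun
      (fun u hu => (if_neg (not_le.mpr hu)).symm) measurableSet_Ioi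

lemma integral_Ioi_zero_ite_rpow (hp : 1 < p) :
    ∫ u in Ioi (0 : ℝ), (if u ≤ 1 then 1 else u ^ (-p)) = p / (p - 1) := by
  have hint := integrableOn_Ioi_zero_ite_rpow hp
  rw [← Ioc_union_Ioi_eq_Ioi zero_le_one] at hint ⊢
  rw [setIntegral_union (Ioc_disjoint_Ioi le_rfl) measurableSet_Ioi
      (hint.mono_set subset_union_left) (hint.mono_set subset_union_right),
    setIntegral_congr_fun measurableSet_Ioc (fun u hu => if_pos hu.2),
    setIntegral_congr_fun measurableSet_Ioi (fun u hu => if_neg (not_le.mpr hu)),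
    integral_Ioi_rpow_of_lt (by linarith) one_pos]
  have : p - 1 ≠ 0 := by linarith
  simp only [integral_const, measureReal_restrict_apply_univ, Real.volume_real_Ioc, one_rpow,
    smul_eq_mul, mul_one, sub_zero, max_eq_left zero_le_one]
  rw [show -p + 1 = -(p - 1) by ring]
  field_simp
  ring

end TailIntegral

section SubgaussianMoment

variable {Ω : Type*} [MeasurableSpace Ω] {μ : Measure Ω} {V : Ω → ℝ} {n : ℝ}

lemma measureReal_exp_mul_sq_ge_le_rpow [IsFiniteMeasure μ] (hV : ∀ ω, 0 ≤ V ω) (hn : 1 < n)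
    (htail : ∀ ε, 0 < ε → μ.real {ω | ε ≤ V ω} ≤ exp (-2 * n * ε ^ 2)) {u : ℝ} (hu : 1 < u) :
    μ.real {ω | u ≤ exp (2 * (n - 1) * V ω ^ 2)} ≤ u ^ (-(n / (n - 1))) := by
  have hs : 0 < 2 * (n - 1) := by linarith
  have hlog : 0 < log u / (2 * (n - 1)) := div_pos (log_pos hu) hs
  set ε := √(log u / (2 * (n - 1)))
  have hsub : {ω | u ≤ exp (2 * (n - 1) * V ω ^ 2)} ⊆ {ω | ε ≤ V ω} := by
    intro ω hω
    have : log u / (2 * (n - 1)) ≤ V ω ^ 2 := by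
      rw [div_le_iff₀ hs, mul_comm, ← log_exp (_ * _)]
      exact log_le_log (by linarith) hω
    exact (sqrt_le_sqrt this).trans_eq (sqrt_sq (hV ω))
  calc μ.real {ω | u ≤ exp (2 * (n - 1) * V ω ^ 2)} ≤ μ.real {ω | ε ≤ V ω} :=
        measureReal_mono hsub
    _ ≤ exp (-2 * n * ε ^ 2) := htail ε (sqrt_pos.mpr hlog)
    _ = u ^ (-(n / (n - 1))) := by
        rw [sq_sqrt hlog.le, rpow_def_of_pos (by linarith)]
        congr 1
        field_simp

lemma integral_exp_mul_sq_le_of_measureReal_ge_le [IsProbabilityMeasure μ] (hVm : Measurable V)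
    (hV : ∀ ω, V ω ∈ Icc (0 : ℝ) 1) (hn : 1 < n)
    (htail : ∀ ε, 0 < ε → μ.real {ω | ε ≤ V ω} ≤ exp (-2 * n * ε ^ 2)) :
    ∫ ω, exp (2 * (n - 1) * V ω ^ 2) ∂μ ≤ n := by
  have hp : 1 < n / (n - 1) := by rw [one_lt_div (by linarith)]; linarith
  have hbound : ∀ ω, ‖exp (2 * (n - 1) * V ω ^ 2)‖ ≤ exp (2 * (n - 1)) := by
    intro ω
    rw [Real.norm_of_nonneg (exp_pos _).le, exp_le_exp]
    exact mul_le_of_le_one_right (by linarith) (pow_le_one₀ (hV ω).1 (hV ω).2)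
  rw [(Integrable.of_bound (by fun_prop) _ (ae_of_all _ hbound)).integral_eq_integral_meas_le
    (ae_of_all _ fun ω => (exp_pos _).le)]
  calc ∫ u in Ioi (0 : ℝ), μ.real {ω | u ≤ exp (2 * (n - 1) * V ω ^ 2)}
      ≤ ∫ u in Ioi (0 : ℝ), (if u ≤ 1 then 1 else u ^ (-(n / (n - 1)))) := by
        refine integral_mono_of_nonneg (ae_of_all _ fun _ => measureReal_nonneg)
          (integrableOn_Ioi_zero_ite_rpow hp) (ae_of_all _ fun u => ?_)
        beta_reduce
        split_ifs with hu1
        · exact measureReal_le_one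
        · exact measureReal_exp_mul_sq_ge_le_rpow (fun ω => (hV ω).1) hn htail (not_le.mp hu1)
    _ = n := by
        have : n - 1 ≠ 0 := by linarith
        rw [integral_Ioi_zero_ite_rpow hp]
        field_simp
        ring

end SubgaussianMoment

section ChangeOfMeasure

variable {α : Type*} [MeasurableSpace α] {Q P : Measure α} [IsProbabilityMeasure Q]
  [IsProbabilityMeasure P]

lemma integral_le_integral_llr_add_log_integral_exp (hQP : Q ≪ P)
    (hllr : Integrable (llr Q P) Q) {g : α → ℝ} (hgQ : Integrable g Q)
    (hgP : Integrable (fun x => exp (g x)) P) :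
    ∫ x, g x ∂Q ≤ ∫ x, llr Q P x ∂Q + log (∫ x, exp (g x) ∂P) := by
  have := isProbabilityMeasure_tilted hgP
  have hgibbs := InformationTheory.integral_llr_add_sub_measure_univ_nonneg
    (hQP.trans (absolutelyContinuous_tilted hgP)) (integrable_llr_tilted_right hQP hgQ hllr hgP)
  rw [integral_llr_tilted_right hQP hgQ hgP hllr] at hgibbs
  simp only [probReal_univ] at hgibbs
  linarith

lemma integral_le_integral_add_sqrt_of_integral_exp_le {R L : α → ℝ} (hR : Measurable R)
    (hL : Measurable L) (hR01 : ∀ x, R x ∈ Icc (0 : ℝ) 1) (hL01 : ∀ x, L x ∈ Icc (0 : ℝ) 1)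
    {s B : ℝ} (hs : 0 < s) (hQP : Q ≪ P) (hllr : Integrable (llr Q P) Q)
    (hB : ∫ x, exp (s * max (R x - L x) 0 ^ 2) ∂P ≤ B) :
    ∫ x, R x ∂Q ≤ ∫ x, L x ∂Q + √((∫ x, llr Q P x ∂Q + log B) / s) := by
  set V := fun x => max (R x - L x) 0
  have hV01 : ∀ x, V x ∈ Icc (0 : ℝ) 1 := fun x =>
    ⟨le_max_right _ _, max_le (by linarith [(hR01 x).2, (hL01 x).1]) zero_le_one⟩
  have hVm : Measurable V := (hR.sub hL).max measurable_const
  have hR_int : Integrable R Q := .of_mem_Icc 0 1 hR.aemeasurable (ae_of_all _ hR01)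
  have hL_int : Integrable L Q := .of_mem_Icc 0 1 hL.aemeasurable (ae_of_all _ hL01)
  have hV_int : Integrable V Q := .of_mem_Icc 0 1 hVm.aemeasurable (ae_of_all _ hV01)
  have hgap : ∫ x, R x ∂Q - ∫ x, L x ∂Q ≤ ∫ x, V x ∂Q := by
    rw [← integral_sub hR_int hL_int]
    exact integral_mono (hR_int.sub hL_int) hV_int fun x => le_max_left _ _
  have hjensen : (∫ x, V x ∂Q) ^ 2 ≤ ∫ x, V x ^ 2 ∂Q := by
    have := variance_nonneg V Q
    rw [variance_eq_sub (memLp_of_bounded (ae_of_all _ hV01) hVm.aestronglyMeasurable 2)] at this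
    simpa using this
  have hsV : ∀ x, s * V x ^ 2 ∈ Icc 0 s := fun x =>
    ⟨by positivity, mul_le_of_le_one_right hs.le (pow_le_one₀ (hV01 x).1 (hV01 x).2)⟩
  have hexp_int : Integrable (fun x => exp (s * V x ^ 2)) P :=
    .of_mem_Icc 0 (exp s) (by fun_prop)
      (ae_of_all _ fun x => ⟨(exp_pos _).le, exp_le_exp.mpr (hsV x).2⟩)
  have hdv := integral_le_integral_llr_add_log_integral_exp hQP hllr
    (.of_mem_Icc 0 s (by fun_prop) (ae_of_all _ hsV)) hexp_int
  rw [integral_const_mul] at hdv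
  have hlogB := log_le_log (integral_exp_pos hexp_int) hB
  have hsqrt : ∫ x, V x ∂Q ≤ √((∫ x, llr Q P x ∂Q + log B) / s) :=
    le_sqrt_of_sq_le (hjensen.trans ((le_div_iff₀' hs).mpr (by linarith)))
  linarith

end ChangeOfMeasure

lemma ofReal_one_sub_le_measure_lt_div {Ω : Type*} [MeasurableSpace Ω] {μ : Measure Ω}
    [IsProbabilityMeasure μ] {F : Ω → ℝ} (hF0 : 0 ≤ᵐ[μ] F) (hF : Integrable F μ) {c δ : ℝ}
    (hc : 0 < c) (hδ : 0 < δ) (hFc : ∫ ω, F ω ∂μ ≤ c) :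
    ENNReal.ofReal (1 - δ) ≤ μ {ω | F ω < c / δ} := by
  have hmarkov : μ {ω | c / δ ≤ F ω} ≤ ENNReal.ofReal δ := by
    rw [ENNReal.le_ofReal_iff_toReal_le (measure_ne_top _ _) hδ.le, ← measureReal_def,
      ← mul_le_mul_iff_right₀ (div_pos hc hδ), div_mul_cancel₀ _ hδ.ne']
    exact (mul_meas_ge_le_integral_of_nonneg hF0 hF _).trans hFc
  have hcompl : {ω | F ω < c / δ} = {ω | c / δ ≤ F ω}ᶜ := by
    ext ω; simp
  rw [ENNReal.ofReal_sub _ hδ.le, ENNReal.ofReal_one, hcompl, tsub_le_iff_left]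
  calc 1 = μ univ := measure_univ.symm
    _ ≤ μ {ω | c / δ ≤ F ω} + μ {ω | c / δ ≤ F ω}ᶜ := measure_univ_le_add_compl _
    _ ≤ _ := by gcongr

lemma integral_mem_Icc_of_mem_Icc {α : Type*} [MeasurableSpace α] {μ : Measure α}
    [IsProbabilityMeasure μ] {X : α → ℝ} (hX : AEMeasurable X μ) {a b : ℝ}
    (hab : ∀ x, X x ∈ Icc a b) : ∫ x, X x ∂μ ∈ Icc a b := by
  have hX_int : Integrable X μ := .of_mem_Icc a b hX (ae_of_all _ hab)
  constructor
  · simpa using integral_mono (integrable_const a) hX_int fun x => (hab x).1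
  · simpa using integral_mono hX_int (integrable_const b) fun x => (hab x).2

section SampleMean

variable {Z : Type*} {N : ℕ}

noncomputable def sampleMean (X : Z → ℝ) (z : Fin N → Z) : ℝ :=
  (1 / N : ℝ) * ∑ i, X (z i)

noncomputable def meanExcess [MeasurableSpace Z] (D : Measure Z) (X : Z → ℝ) (z : Fin N → Z) :
    ℝ :=
  max (∫ x, X x ∂D - sampleMean X z) 0

lemma sampleMean_mem_Icc {X : Z → ℝ} (hX01 : ∀ x, X x ∈ Icc (0 : ℝ) 1) (z : Fin N → Z) :
    sampleMean X z ∈ Icc (0 : ℝ) 1 := by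
  rw [sampleMean, one_div_mul_eq_div]
  refine ⟨div_nonneg (Finset.sum_nonneg fun i _ => (hX01 (z i)).1) N.cast_nonneg,
    div_le_one_of_le₀ ?_ N.cast_nonneg⟩
  simpa using Finset.sum_le_sum fun i (_ : i ∈ Finset.univ) => (hX01 (z i)).2

variable [MeasurableSpace Z] (D : Measure Z) [IsProbabilityMeasure D] {X : Z → ℝ}

lemma meanExcess_mem_Icc (hX : Measurable X) (hX01 : ∀ x, X x ∈ Icc (0 : ℝ) 1)
    (z : Fin N → Z) : meanExcess D X z ∈ Icc (0 : ℝ) 1 :=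
  ⟨le_max_right _ _, max_le (by linarith [(sampleMean_mem_Icc hX01 z).1,
    (integral_mem_Icc_of_mem_Icc (μ := D) hX.aemeasurable hX01).2]) zero_le_one⟩

lemma measureReal_integral_sub_sampleMean_ge_le (hX : Measurable X)
    (hX01 : ∀ x, X x ∈ Icc (0 : ℝ) 1) (hN : 0 < N) {ε : ℝ} (hε : 0 ≤ ε) :
    (Measure.pi fun _ : Fin N => D).real {z | ε ≤ ∫ x, X x ∂D - sampleMean X z}
      ≤ exp (-2 * N * ε ^ 2) := by
  set m := ∫ x, X x ∂D
  have hN' : (0 : ℝ) < N := Nat.cast_pos.mpr hN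
  have h_indep : iIndepFun (fun i (z : Fin N → Z) => m - X (z i)) (Measure.pi fun _ => D) :=
    iIndepFun_pi (X := fun _ x => m - X x) fun _ => (measurable_const.sub hX).aemeasurable
  have h_subG : ∀ i ∈ (Finset.univ : Finset (Fin N)),
      HasSubgaussianMGF (fun z : Fin N → Z => m - X (z i)) ((‖m - (m - 1)‖₊ / 2) ^ 2)
        (Measure.pi fun _ => D) := by
    intro i _
    have hXi : Measurable fun z : Fin N → Z => X (z i) := hX.comp (measurable_pi_apply i)
    refine hasSubgaussianMGF_of_mem_Icc_of_integral_eq_zero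
      (measurable_const.sub hXi).aemeasurable
      (ae_of_all _ fun z => ⟨by linarith [(hX01 (z i)).2], by linarith [(hX01 (z i)).1]⟩) ?_
    rw [integral_sub (integrable_const _) (Integrable.of_mem_Icc 0 1 hXi.aemeasurable
      (ae_of_all _ fun z => hX01 (z i))),
      integral_comp_eval (μ := fun _ : Fin N => D) (i := i) hX.aestronglyMeasurable]
    simp [m]
  have h := HasSubgaussianMGF.measure_sum_ge_le_of_iIndepFun h_indep h_subG (mul_nonneg hN'.le hε)
  have hset : {z : Fin N → Z | ε ≤ m - sampleMean X z}
      = {z | N * ε ≤ ∑ i ∈ Finset.univ, (m - X (z i))} := by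
    ext z
    simp only [Set.mem_ofPred_eq, sampleMean, Finset.sum_sub_distrib, Finset.sum_const,
      Finset.card_univ, Fintype.card_fin, nsmul_eq_mul]
    rw [← mul_le_mul_iff_right₀ hN']
    field_simp
  rw [hset]
  convert h using 2
  simp [field]

lemma integral_exp_mul_sq_meanExcess_le (hX : Measurable X) (hX01 : ∀ x, X x ∈ Icc (0 : ℝ) 1)
    (hN : 2 ≤ N) :
    ∫ z, exp (2 * ((N : ℝ) - 1) * meanExcess D X z ^ 2) ∂(Measure.pi fun _ : Fin N => D)
      ≤ N := by
  refine integral_exp_mul_sq_le_of_measureReal_ge_le ?_ (meanExcess_mem_Icc D hX hX01)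
    (by exact_mod_cast hN) fun ε hε => ?_
  · unfold meanExcess sampleMean
    fun_prop
  · have hset : {z : Fin N → Z | ε ≤ meanExcess D X z}
        = {z | ε ≤ ∫ x, X x ∂D - sampleMean X z} := by
      ext z
      simp [meanExcess, hε.not_ge]
    rw [hset]
    exact measureReal_integral_sub_sampleMean_ge_le D hX hX01 (by omega) hε.le

end SampleMean

section PACBayes

variable {Θ Z : Type*} [MeasurableSpace Θ] [MeasurableSpace Z] {ℓ : Θ → Z → ℝ}
  (D : Measure Z) [IsProbabilityMeasure D] (P : Measure Θ) [IsProbabilityMeasure P] {N : ℕ}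

lemma measurable_integral_uncurry (hℓ : Measurable (uncurry ℓ)) :
    Measurable fun θ => ∫ x, ℓ θ x ∂D :=
  hℓ.stronglyMeasurable.integral_prod_right'.measurable

lemma measurable_sampleMean_uncurry (hℓ : Measurable (uncurry ℓ)) :
    Measurable fun p : (Fin N → Z) × Θ => sampleMean (ℓ p.2) p.1 := by
  unfold sampleMean
  exact (Finset.measurable_sum _ fun i _ => hℓ.comp
    (measurable_snd.prodMk ((measurable_pi_apply i).comp measurable_fst))).const_mul _

lemma integrable_exp_mul_sq_meanExcess (hℓ : Measurable (uncurry ℓ))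
    (hℓ01 : ∀ θ x, ℓ θ x ∈ Icc (0 : ℝ) 1) (s : ℝ) :
    Integrable (fun p : (Fin N → Z) × Θ => exp (s * meanExcess D (ℓ p.2) p.1 ^ 2))
      ((Measure.pi fun _ => D).prod P) := by
  have hmeas : Measurable fun p : (Fin N → Z) × Θ => meanExcess D (ℓ p.2) p.1 :=
    (((measurable_integral_uncurry D hℓ).comp measurable_snd).sub
      (measurable_sampleMean_uncurry hℓ)).max measurable_const
  refine .of_mem_Icc 0 (exp |s|) ((hmeas.pow_const 2).const_mul s).exp.aemeasurable
    (ae_of_all _ fun p => ⟨(exp_pos _).le, ?_⟩)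
  have hV := meanExcess_mem_Icc D (hℓ.comp measurable_prodMk_left) (hℓ01 p.2) p.1
  rw [exp_le_exp]
  calc s * meanExcess D (ℓ p.2) p.1 ^ 2 ≤ |s| * meanExcess D (ℓ p.2) p.1 ^ 2 := by
        gcongr; exact le_abs_self s
    _ ≤ |s| := mul_le_of_le_one_right (abs_nonneg s) (pow_le_one₀ hV.1 hV.2)

lemma integral_integral_exp_mul_sq_meanExcess_le (hℓ : Measurable (uncurry ℓ))
    (hℓ01 : ∀ θ x, ℓ θ x ∈ Icc (0 : ℝ) 1) (hN : 2 ≤ N) :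
    ∫ z, ∫ θ, exp (2 * ((N : ℝ) - 1) * meanExcess D (ℓ θ) z ^ 2) ∂P
      ∂(Measure.pi fun _ : Fin N => D) ≤ N := by
  rw [integral_integral_swap (integrable_exp_mul_sq_meanExcess D P hℓ hℓ01 _)]
  calc ∫ θ, ∫ z, exp (2 * ((N : ℝ) - 1) * meanExcess D (ℓ θ) z ^ 2)
        ∂(Measure.pi fun _ : Fin N => D) ∂P
      ≤ ∫ _θ, (N : ℝ) ∂P :=
        integral_mono_of_nonneg (ae_of_all _ fun θ => integral_nonneg fun z => (exp_pos _).le)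
          (integrable_const _) (ae_of_all _ fun θ =>
            integral_exp_mul_sq_meanExcess_le D (hℓ.comp measurable_prodMk_left) (hℓ01 θ) hN)
    _ = N := by simp

end PACBayes

/-- **PAC-Bayes bound (McAllester).**  Let `ℓ : Θ × Z → [0,1]` be a jointly measurable
loss, `D` a probability measure on `Z`, `P` a prior probability measure on `Θ`, `N ≥ 2`,
and `δ ∈ (0,1)`.  Then with `D^N`-probability at least `1 - δ` over the i.i.d. sample
`z = (z₁, …, z_N)`, simultaneously for every posterior probability measure `Q` on `Θ`,
either `KL(Q ‖ P) = +∞` (in which case the bound is vacuous) or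
`E_{θ∼Q} E_{z∼D} ℓ(θ, z) ≤ E_{θ∼Q} (1/N) ∑ᵢ ℓ(θ, zᵢ) + √((KL(Q‖P) + ln(N/δ)) / (2(N-1)))`. -/
theorem pac_bayes_mcallester
    {Θ Z : Type*} [MeasurableSpace Θ] [MeasurableSpace Z]
    (ℓ : Θ → Z → ℝ) (hℓ_meas : Measurable (Function.uncurry ℓ))
    (hℓ_bounds : ∀ θ z, ℓ θ z ∈ Set.Icc (0 : ℝ) 1)
    (D : Measure Z) [IsProbabilityMeasure D]
    (P : Measure Θ) [IsProbabilityMeasure P]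
    (N : ℕ) (hN : 2 ≤ N) (δ : ℝ) (hδ : δ ∈ Set.Ioo (0 : ℝ) 1) :
    ENNReal.ofReal (1 - δ) ≤
      (Measure.pi fun _ : Fin N => D)
        {z : Fin N → Z | ∀ Q : Measure Θ, IsProbabilityMeasure Q →
          klDivergence Q P = ⊤ ∨
          ∫ θ, ∫ x, ℓ θ x ∂D ∂Q
            ≤ ∫ θ, ((1 / N : ℝ) * ∑ i, ℓ θ (z i)) ∂Q
              + Real.sqrt (((klDivergence Q P).toReal + Real.log (N / δ))
                  / (2 * ((N : ℝ) - 1)))} := by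
  have hs : (0 : ℝ) < 2 * ((N : ℝ) - 1) := by
    have : (2 : ℝ) ≤ N := by exact_mod_cast hN
    linarith
  have hF_int := (integrable_exp_mul_sq_meanExcess (N := N) D P hℓ_meas hℓ_bounds
    (2 * ((N : ℝ) - 1))).integral_prod_left
  refine (ofReal_one_sub_le_measure_lt_div (ae_of_all _ fun z => integral_nonneg
    fun θ => (exp_pos _).le) hF_int (by positivity) hδ.1
    (integral_integral_exp_mul_sq_meanExcess_le D P hℓ_meas hℓ_bounds hN)).trans
    (measure_mono fun z hz Q hQ => ?_)
  by_cases hKL : Q ≪ P ∧ Integrable (llr Q P) Q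
  · right
    rw [klDivergence, if_pos hKL, EReal.toReal_coe]
    exact integral_le_integral_add_sqrt_of_integral_exp_le
      (measurable_integral_uncurry D hℓ_meas)
      ((measurable_sampleMean_uncurry hℓ_meas).comp measurable_prodMk_left)
      (fun θ => integral_mem_Icc_of_mem_Icc (hℓ_meas.comp measurable_prodMk_left).aemeasurable
        (hℓ_bounds θ))
      (fun θ => sampleMean_mem_Icc (hℓ_bounds θ) z) hs hKL.1 hKL.2 hz.le
  · exact Or.inl (if_neg hKL)
end
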